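/- arXiv:2206.14791 — 4 statements merged into one kernel-verified Lean document; each statement's English description precedes it below -/
import Mathlib

section
/- Let n, m ≥ 1, let p ∈ ℝⁿ and q ∈ ℝᵐ be probability vectors with strictly positive entries, let C ∈ ℝ^{n×m} be an arbitrary cost matrix, and let ε > 0. Then the function P ↦ Σ_{i,j} P_{ij} C_{ij} + ε Σ_{i,j} P_{ij} log P_{ij} (with the convention 0 log 0 = 0) has a unique minimizer P* over the transportation polytope Π(p,q); this minimizer has strictly positive entries, and there exist vectors u ∈ ℝ^n and v ∈ ℝ^m with strictly positive entries such that P*_{ij} = u_i exp(−C_{ij}/ε) v_j for all i, j. -/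
/-- The transportation polytope `Π(p,q)` of matrices with nonnegative entries and
marginals `p` and `q`. -/
def InTransportPolytope {n m : ℕ} (p : Fin n → ℝ) (q : Fin m → ℝ)
    (P : Matrix (Fin n) (Fin m) ℝ) : Prop :=
  (∀ i j, 0 ≤ P i j) ∧ (∀ i, ∑ j, P i j = p i) ∧ (∀ j, ∑ i, P i j = q j)

/-- The entropy-regularized transport objective
`P ↦ Σ P_{ij} C_{ij} + ε Σ P_{ij} log P_{ij}` (with `0 log 0 = 0`, as `Real.log 0 = 0`). -/
noncomputable def entropicObjective {n m : ℕ} (C : Matrix (Fin n) (Fin m) ℝ) (ε : ℝ)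
    (P : Matrix (Fin n) (Fin m) ℝ) : ℝ :=
  (∑ i, ∑ j, P i j * C i j) + ε * ∑ i, ∑ j, P i j * Real.log (P i j)

/-!
The polytope is compact and the objective continuous, so a minimizer `P*` exists; it is unique
because `x log x` is strictly convex. `P*` has no zero entry: moving a fraction `t` of the mass
towards the product plan `p qᵀ` changes the contribution of a zero entry by `ε t b log t`
(`b > 0` its entry in `p qᵀ`), which for small `t` outweighs the `O(t)` change of everything else.
Once all entries are positive, `P*` is an interior point along every direction `x yᵀ` with
`∑ x = ∑ y = 0` (these preserve both marginals), so the derivative of the objective vanishes there.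
This says that the matrix `C + ε log P*` is orthogonal to all such `x yᵀ`, i.e. it has the form
`a_i + b_j`, and then `P*_{ij} = e^{a_i/ε} e^{-C_{ij}/ε} e^{b_j/ε}`.
-/

open Finset Real Matrix Filter Topology

theorem StrictConvexOn.sum_pi {ι E : Type*} [Fintype ι] [AddCommGroup E] [Module ℝ E]
    {s : ι → Set E} {φ : ι → E → ℝ} (hφ : ∀ i, StrictConvexOn ℝ (s i) (φ i)) :
    StrictConvexOn ℝ (Set.univ.pi s) (fun x => ∑ i, φ i (x i)) := by
  refine ⟨convex_pi fun i _ => (hφ i).1, fun x hx y hy hxy a b ha hb hab => ?_⟩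
  obtain ⟨k, hk⟩ := Function.ne_iff.1 hxy
  simp only [Set.mem_univ_pi] at hx hy
  simp only [Pi.add_apply, Pi.smul_apply, smul_eq_mul, mul_sum, ← sum_add_distrib]
  exact sum_lt_sum (fun i _ => (hφ i).convexOn.2 (hx i) (hy i) ha.le hb.le hab)
    ⟨k, mem_univ k, (hφ k).2 (hx k) (hy k) hk ha hb hab⟩

theorem strictConvexOn_mul_add_mul_mul_log (c : ℝ) {ε : ℝ} (hε : 0 < ε) :
    StrictConvexOn ℝ (Set.Ici 0) (fun x => x * c + ε * (x * log x)) := by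
  refine ⟨convex_Ici 0, fun x hx y hy hxy a b ha hb hab => ?_⟩
  have := mul_lt_mul_of_pos_left (strictConvexOn_mul_log.2 hx hy hxy ha hb hab) hε
  simp only [smul_eq_mul] at this ⊢
  linear_combination this

theorem sum_mul_log_convex_comb_le_of_eq_zero {ι : Type*} [Fintype ι] {x y : ι → ℝ}
    (hx : ∀ k, 0 ≤ x k) (hy : ∀ k, 0 ≤ y k) {k₀ : ι} (hk₀ : x k₀ = 0) {t : ℝ}
    (ht₀ : 0 ≤ t) (ht₁ : t ≤ 1) :
    ∑ k, ((1 - t) * x k + t * y k) * log ((1 - t) * x k + t * y k) ≤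
      (1 - t) * ∑ k, x k * log (x k) + t * ∑ k, y k * log (y k) + t * y k₀ * log t := by
  classical
  have hconv (k) : ((1 - t) * x k + t * y k) * log ((1 - t) * x k + t * y k) ≤
      (1 - t) * (x k * log (x k)) + t * (y k * log (y k)) :=
    convexOn_mul_log.2 (hx k) (hy k) (by linarith) ht₀ (by ring)
  have hk₀_eq : ((1 - t) * x k₀ + t * y k₀) * log ((1 - t) * x k₀ + t * y k₀) =
      (1 - t) * (x k₀ * log (x k₀)) + t * (y k₀ * log (y k₀)) + t * y k₀ * log t := by
    have := negMulLog_mul t (y k₀)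
    simp only [negMulLog] at this
    rw [hk₀, mul_zero, zero_add]
    linear_combination -this
  rw [mul_sum, mul_sum, ← sum_add_distrib, ← add_sum_erase _ _ (mem_univ k₀),
    ← add_sum_erase _ _ (mem_univ k₀), hk₀_eq]
  linarith [sum_le_sum fun k (_ : k ∈ univ.erase k₀) => hconv k]

theorem eq_add_of_forall_sum_mul_eq_zero {ι κ R : Type*} [Fintype ι] [Fintype κ] [CommRing R]
    {G : ι → κ → R}
    (hG : ∀ (x : ι → R) (y : κ → R), ∑ i, x i = 0 → ∑ j, y j = 0 →
      ∑ i, ∑ j, x i * y j * G i j = 0)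
    (i₀ : ι) (j₀ : κ) (i : ι) (j : κ) : G i j = G i j₀ + (G i₀ j - G i₀ j₀) := by
  classical
  have := hG (Pi.single i 1 - Pi.single i₀ 1) (Pi.single j 1 - Pi.single j₀ 1) (by simp)
    (by simp)
  simp only [Pi.sub_apply, sub_mul, mul_sub, sum_sub_distrib, Pi.single_apply, ite_mul, one_mul,
    zero_mul, mul_ite, mul_one, mul_zero, sum_ite_eq', mem_univ, if_true] at this
  linear_combination this

section EntropicTransport

variable {n m : ℕ} {p : Fin n → ℝ} {q : Fin m → ℝ} (C : Matrix (Fin n) (Fin m) ℝ) {ε : ℝ}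
  {P Q : Matrix (Fin n) (Fin m) ℝ}

theorem isCompact_setOf_inTransportPolytope (p : Fin n → ℝ) (q : Fin m → ℝ) :
    IsCompact {P : Matrix (Fin n) (Fin m) ℝ | InTransportPolytope p q P} := by
  refine (isCompact_Icc (a := (0 : Fin n → Fin m → ℝ)) (b := fun i _ => p i)).of_isClosed_subset
    ?_ fun P ⟨hP0, hrow, _⟩ => ⟨?_, ?_⟩
  · simp only [InTransportPolytope, Set.ofPred_and, Set.ofPred_forall]
    exact .inter (isClosed_iInter fun i => isClosed_iInter fun j => isClosed_le (by fun_prop)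
        (by fun_prop))
      (.inter (isClosed_iInter fun i => isClosed_eq (by fun_prop) (by fun_prop))
        (isClosed_iInter fun j => isClosed_eq (by fun_prop) (by fun_prop)))
  · exact fun i j => hP0 i j
  · exact fun i j => (single_le_sum (fun j _ => hP0 i j) (mem_univ j)).trans_eq (hrow i)

theorem convex_setOf_inTransportPolytope (p : Fin n → ℝ) (q : Fin m → ℝ) :
    Convex ℝ {P : Matrix (Fin n) (Fin m) ℝ | InTransportPolytope p q P} := by
  rintro P ⟨hP0, hProw, hPcol⟩ Q ⟨hQ0, hQrow, hQcol⟩ a b ha hb hab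
  refine ⟨fun i j => ?_, fun i => ?_, fun j => ?_⟩
  · simp only [Matrix.add_apply, Matrix.smul_apply, smul_eq_mul]
    have := hP0 i j
    have := hQ0 i j
    positivity
  · simp only [Matrix.add_apply, Matrix.smul_apply, smul_eq_mul, sum_add_distrib, ← mul_sum,
      hProw, hQrow, ← add_mul, hab, one_mul]
  · simp only [Matrix.add_apply, Matrix.smul_apply, smul_eq_mul, sum_add_distrib, ← mul_sum,
      hPcol, hQcol, ← add_mul, hab, one_mul]

theorem inTransportPolytope_vecMulVec (hp : ∀ i, 0 ≤ p i) (hq : ∀ j, 0 ≤ q j)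
    (hp_sum : ∑ i, p i = 1) (hq_sum : ∑ j, q j = 1) :
    InTransportPolytope p q (vecMulVec p q) := by
  refine ⟨fun i j => mul_nonneg (hp i) (hq j), fun i => ?_, fun j => ?_⟩
  · simp [vecMulVec_apply, ← mul_sum, hq_sum]
  · simp [vecMulVec_apply, ← sum_mul, hp_sum]

theorem InTransportPolytope.add_smul_vecMulVec (hP : InTransportPolytope p q P)
    {x : Fin n → ℝ} {y : Fin m → ℝ} (hx : ∑ i, x i = 0) (hy : ∑ j, y j = 0) {t : ℝ}
    (hnonneg : ∀ i j, 0 ≤ P i j + t * (x i * y j)) :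
    InTransportPolytope p q (P + t • vecMulVec x y) := by
  refine ⟨hnonneg, fun i => ?_, fun j => ?_⟩
  · simp [vecMulVec_apply, sum_add_distrib, ← mul_sum, hy, hP.2.1 i]
  · simp [vecMulVec_apply, sum_add_distrib, ← mul_sum, ← sum_mul, hx, hP.2.2 j]

theorem continuous_entropicObjective (ε : ℝ) : Continuous (entropicObjective C ε) := by
  unfold entropicObjective
  fun_prop

theorem strictConvexOn_entropicObjective (hε : 0 < ε) :
    StrictConvexOn ℝ (Set.univ.pi fun _ => Set.univ.pi fun _ => Set.Ici 0)
      (entropicObjective C ε) := by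
  refine (StrictConvexOn.sum_pi fun i => StrictConvexOn.sum_pi fun j =>
    strictConvexOn_mul_add_mul_mul_log (C i j) hε).congr fun P _ => ?_
  simp only [entropicObjective, mul_sum, sum_add_distrib]

theorem hasDerivAt_entropicObjective_add_smul (hP : ∀ i j, 0 < P i j)
    (D : Matrix (Fin n) (Fin m) ℝ) :
    HasDerivAt (fun t : ℝ => entropicObjective C ε (P + t • D))
      (∑ i, ∑ j, D i j * (C i j + ε * (log (P i j) + 1))) 0 := by
  have hline (i j) : HasDerivAt (fun t : ℝ => P i j + t * D i j) (D i j) 0 := by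
    simpa using ((hasDerivAt_id (0 : ℝ)).mul_const (D i j)).const_add (P i j)
  have hmulLog (i j) : HasDerivAt (fun t : ℝ => (P i j + t * D i j) * log (P i j + t * D i j))
      ((log (P i j) + 1) * D i j) 0 :=
    (hasDerivAt_mul_log (hP i j).ne').comp_of_eq (0 : ℝ) (hline i j) (by simp)
  refine ((HasDerivAt.fun_sum (u := univ) fun i _ => HasDerivAt.fun_sum (u := univ) fun j _ =>
      (hline i j).mul_const (C i j)).fun_add
    ((HasDerivAt.fun_sum (u := univ) fun i _ => HasDerivAt.fun_sum (u := univ) fun j _ =>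
      hmulLog i j).const_mul ε)).congr_deriv ?_
  simp only [mul_sum, ← sum_add_distrib]
  exact sum_congr rfl fun i _ => sum_congr rfl fun j _ => by ring

theorem entropicObjective_convex_comb_le (hε : 0 ≤ ε) (hP : ∀ i j, 0 ≤ P i j)
    (hQ : ∀ i j, 0 ≤ Q i j) {i₀ : Fin n} {j₀ : Fin m} (hzero : P i₀ j₀ = 0) {t : ℝ}
    (ht₀ : 0 ≤ t) (ht₁ : t ≤ 1) :
    entropicObjective C ε ((1 - t) • P + t • Q) ≤
      (1 - t) * entropicObjective C ε P + t * entropicObjective C ε Q +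
        ε * (t * Q i₀ j₀ * log t) := by
  have hent := sum_mul_log_convex_comb_le_of_eq_zero (x := fun k : Fin n × Fin m => P k.1 k.2)
    (y := fun k => Q k.1 k.2) (fun k => hP k.1 k.2) (fun k => hQ k.1 k.2) (k₀ := (i₀, j₀))
    hzero ht₀ ht₁
  simp only [Fintype.sum_prod_type] at hent
  have hlin : ∑ i, ∑ j, ((1 - t) * P i j + t * Q i j) * C i j =
      (1 - t) * ∑ i, ∑ j, P i j * C i j + t * ∑ i, ∑ j, Q i j * C i j := by
    simp only [mul_sum, ← sum_add_distrib]
    exact sum_congr rfl fun i _ => sum_congr rfl fun j _ => by ring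
  simp only [entropicObjective, Matrix.add_apply, Matrix.smul_apply, smul_eq_mul]
  linarith [mul_le_mul_of_nonneg_left hent hε]

theorem InTransportPolytope.eq_of_isMinOn (hε : 0 < ε) (hP : InTransportPolytope p q P)
    (hQ : InTransportPolytope p q Q)
    (hPmin : IsMinOn (entropicObjective C ε) {P | InTransportPolytope p q P} P)
    (hQmin : IsMinOn (entropicObjective C ε) {P | InTransportPolytope p q P} Q) : P = Q :=
  ((strictConvexOn_entropicObjective C hε).subset
    (fun _ hR => Set.mem_univ_pi.2 fun i => Set.mem_univ_pi.2 fun j => hR.1 i j)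
    (convex_setOf_inTransportPolytope p q)).eq_of_isMinOn hPmin hQmin hP hQ

theorem InTransportPolytope.pos_of_isMinOn (hp : ∀ i, 0 < p i) (hq : ∀ j, 0 < q j)
    (hp_sum : ∑ i, p i = 1) (hq_sum : ∑ j, q j = 1) (hε : 0 < ε) (hP : InTransportPolytope p q P)
    (hmin : IsMinOn (entropicObjective C ε) {P | InTransportPolytope p q P} P) (i : Fin n)
    (j : Fin m) : 0 < P i j := by
  set f := entropicObjective C ε
  refine (hP.1 i j).lt_of_ne' fun hzero => ?_
  have hQ := inTransportPolytope_vecMulVec (fun i => (hp i).le) (fun j => (hq j).le) hp_sum hq_sum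
  have hbound (t : ℝ) (ht : t ∈ Set.Ioo 0 1) :
      f P - f (vecMulVec p q) ≤ ε * (p i * q j) * log t := by
    have hmem := convex_setOf_inTransportPolytope p q hP hQ (sub_nonneg.2 ht.2.le) ht.1.le
      (sub_add_cancel 1 t)
    have := (hmin hmem).trans
      (entropicObjective_convex_comb_le C hε.le hP.1 hQ.1 hzero ht.1.le ht.2.le)
    refine le_of_mul_le_mul_left ?_ ht.1
    simp only [vecMulVec_apply] at this
    linarith
  have hlog : Tendsto (fun t => ε * (p i * q j) * log t) (𝓝[>] 0) atBot :=
    tendsto_log_nhdsGT_zero.const_mul_atBot (mul_pos hε (mul_pos (hp i) (hq j)))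
  obtain ⟨t, hlt, ht⟩ :=
    ((hlog.eventually (eventually_lt_atBot _)).and (Ioo_mem_nhdsGT one_pos)).exists
  exact (hbound t ht).not_gt hlt

theorem InTransportPolytope.sum_mul_eq_zero_of_isMinOn (hP : InTransportPolytope p q P)
    (hpos : ∀ i j, 0 < P i j)
    (hmin : IsMinOn (entropicObjective C ε) {P | InTransportPolytope p q P} P)
    {x : Fin n → ℝ} {y : Fin m → ℝ} (hx : ∑ i, x i = 0) (hy : ∑ j, y j = 0) :
    ∑ i, ∑ j, x i * y j * (C i j + ε * log (P i j)) = 0 := by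
  have hnear : ∀ᶠ t in 𝓝 (0 : ℝ), ∀ i j, 0 < P i j + t * (x i * y j) := by
    simp only [eventually_all]
    intro i j
    exact ContinuousAt.eventually_lt (f := fun _ => 0) (g := fun t => P i j + t * (x i * y j))
      (by fun_prop) (by fun_prop) (by simpa using hpos i j)
  have hloc : IsLocalMin (fun t : ℝ => entropicObjective C ε (P + t • vecMulVec x y)) 0 := by
    filter_upwards [hnear] with t ht
    simpa using hmin (hP.add_smul_vecMulVec hx hy fun i j => (ht i j).le)
  have hderiv := hloc.hasDerivAt_eq_zero (hasDerivAt_entropicObjective_add_smul C hpos _)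
  calc ∑ i, ∑ j, x i * y j * (C i j + ε * log (P i j))
      = ∑ i, ∑ j, vecMulVec x y i j * (C i j + ε * (log (P i j) + 1)) -
          ε * ((∑ i, x i) * ∑ j, y j) := by
        rw [sum_mul_sum, mul_sum, ← sum_sub_distrib]
        refine sum_congr rfl fun i _ => ?_
        rw [mul_sum, ← sum_sub_distrib]
        exact sum_congr rfl fun j _ => by rw [vecMulVec_apply]; ring
    _ = 0 := by rw [hderiv, hx, zero_mul, mul_zero, sub_zero]

theorem exists_scaling_of_add_mul_log_eq (hε : 0 < ε) (hpos : ∀ i j, 0 < P i j)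
    {a : Fin n → ℝ} {b : Fin m → ℝ} (h : ∀ i j, C i j + ε * log (P i j) = a i + b j) :
    ∃ (u : Fin n → ℝ) (v : Fin m → ℝ), (∀ i, 0 < u i) ∧ (∀ j, 0 < v j) ∧
      ∀ i j, P i j = u i * exp (-C i j / ε) * v j := by
  refine ⟨fun i => exp (a i / ε), fun j => exp (b j / ε), fun i => exp_pos _, fun j => exp_pos _,
    fun i j => ?_⟩
  rw [← exp_add, ← exp_add, ← exp_log (hpos i j)]
  congr 1
  field_simp
  linarith [h i j]

end EntropicTransport

/-- **Cuturi: existence, uniqueness and Gibbs form of the entropic optimal plan.**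
For strictly positive probability vectors `p`, `q`, any cost matrix `C` and `ε > 0`,
the entropy-regularized objective has a unique minimizer over `Π(p,q)`; it has strictly
positive entries and has the scaling form `P*_{ij} = u_i exp(−C_{ij}/ε) v_j` with
positive vectors `u`, `v`. -/
theorem entropic_ot_unique_minimizer {n m : ℕ} (hn : 1 ≤ n) (hm : 1 ≤ m)
    (p : Fin n → ℝ) (q : Fin m → ℝ)
    (hp_pos : ∀ i, 0 < p i) (hq_pos : ∀ j, 0 < q j)
    (hp_sum : ∑ i, p i = 1) (hq_sum : ∑ j, q j = 1)
    (C : Matrix (Fin n) (Fin m) ℝ) (ε : ℝ) (hε : 0 < ε) :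
    ∃ Pstar : Matrix (Fin n) (Fin m) ℝ,
      InTransportPolytope p q Pstar ∧
      (∀ i j, 0 < Pstar i j) ∧
      -- Pstar is the unique minimizer
      (∀ P, InTransportPolytope p q P → entropicObjective C ε Pstar ≤ entropicObjective C ε P) ∧
      (∀ P, InTransportPolytope p q P →
        entropicObjective C ε P = entropicObjective C ε Pstar → P = Pstar) ∧
      -- Gibbs / Sinkhorn scaling form
      (∃ (u : Fin n → ℝ) (v : Fin m → ℝ), (∀ i, 0 < u i) ∧ (∀ j, 0 < v j) ∧
        ∀ i j, Pstar i j = u i * Real.exp (-(C i j) / ε) * v j) := by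
  have hprod := inTransportPolytope_vecMulVec (fun i => (hp_pos i).le) (fun j => (hq_pos j).le)
    hp_sum hq_sum
  obtain ⟨P, hP, hmin⟩ := (isCompact_setOf_inTransportPolytope p q).exists_isMinOn ⟨_, hprod⟩
    (continuous_entropicObjective C ε).continuousOn
  have hpos := hP.pos_of_isMinOn C hp_pos hq_pos hp_sum hq_sum hε hmin
  have hsplit := eq_add_of_forall_sum_mul_eq_zero
    (fun x y hx hy => hP.sum_mul_eq_zero_of_isMinOn C hpos hmin hx hy) ⟨0, hn⟩ ⟨0, hm⟩
  refine ⟨P, hP, hpos, fun _ hQ => hmin hQ, fun _ hQ hQP => ?_,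
    exists_scaling_of_add_mul_log_eq C hε hpos hsplit⟩
  exact hQ.eq_of_isMinOn C hε hP (fun _ hR => hQP ▸ hmin hR) hmin
end

section
/- Let p ∈ ℝⁿ and q ∈ ℝᵐ be probability vectors, C ∈ ℝ^{n×m} a cost matrix, and for ε > 0 define the entropy-regularized transport value W_ε(p,q) = min_{P ∈ Π(p,q)} ( Σ_{i,j} P_{ij} C_{ij} + ε Σ_{i,j} P_{ij} log P_{ij} ), with the convention 0 log 0 = 0, and the unregularized value W(p,q) = min_{P ∈ Π(p,q)} Σ_{i,j} P_{ij} C_{ij}. Then W_ε(p,q) converges to W(p,q) as ε → 0⁺. -/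
/-- The entropy-regularized transport value
`W_ε(p,q) = min_{P ∈ Π(p,q)} ( Σ P_{ij} C_{ij} + ε Σ P_{ij} log P_{ij} )`
(with `0 log 0 = 0`, as `Real.log 0 = 0`); for `ε = 0` this is the unregularized
value `W(p,q)`. -/
noncomputable def regularizedTransportValue {n m : ℕ} (p : Fin n → ℝ) (q : Fin m → ℝ)
    (C : Matrix (Fin n) (Fin m) ℝ) (ε : ℝ) : ℝ :=
  sInf {v : ℝ | ∃ P : Matrix (Fin n) (Fin m) ℝ, InTransportPolytope p q P ∧
    v = (∑ i, ∑ j, P i j * C i j) + ε * ∑ i, ∑ j, P i j * Real.log (P i j)}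

private lemma mul_log_bounds {t : ℝ} (h0 : 0 ≤ t) (h1 : t ≤ 1) :
    -1 ≤ t * Real.log t ∧ t * Real.log t ≤ 0 := by
  rcases eq_or_lt_of_le h0 with h | h
  · simp [← h]
  refine ⟨?_, mul_nonpos_of_nonneg_of_nonpos h0 (Real.log_nonpos h0 h1)⟩
  have hlog : Real.log (1 / t) ≤ 1 / t - 1 := Real.log_le_sub_one_of_pos (by positivity)
  rw [one_div, Real.log_inv] at hlog
  have ht : t * t⁻¹ = 1 := mul_inv_cancel₀ h.ne'
  nlinarith [mul_le_mul_of_nonneg_left hlog h0]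

/-- **Convergence of entropic optimal transport to optimal transport as `ε → 0⁺`.** -/
theorem entropic_transport_tendsto_transport {n m : ℕ} (hn : 1 ≤ n) (hm : 1 ≤ m)
    (p : Fin n → ℝ) (q : Fin m → ℝ)
    (hp_nonneg : ∀ i, 0 ≤ p i) (hq_nonneg : ∀ j, 0 ≤ q j)
    (hp_sum : ∑ i, p i = 1) (hq_sum : ∑ j, q j = 1)
    (C : Matrix (Fin n) (Fin m) ℝ) :
    Filter.Tendsto (fun ε => regularizedTransportValue p q C ε)
      (nhdsWithin 0 (Set.Ioi 0)) (nhds (regularizedTransportValue p q C 0)) := by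
  set f : Matrix (Fin n) (Fin m) ℝ → ℝ := fun P => ∑ i, ∑ j, P i j * C i j with hf
  set h : Matrix (Fin n) (Fin m) ℝ → ℝ := fun P => ∑ i, ∑ j, P i j * Real.log (P i j) with hh
  set S : ℝ → Set ℝ := fun ε => {v : ℝ | ∃ P : Matrix (Fin n) (Fin m) ℝ,
    InTransportPolytope p q P ∧ v = f P + ε * h P} with hS
  have hW : ∀ ε, regularizedTransportValue p q C ε = sInf (S ε) := fun ε => rfl
  set K : ℝ := (n : ℝ) * m with hK
  set B : ℝ := ∑ i, ∑ j, |C i j| with hB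
  have hK0 : 0 ≤ K := by positivity
  -- each entry of a polytope matrix is in [0,1]
  have hle1 : ∀ P, InTransportPolytope p q P → ∀ i j, P i j ≤ 1 := by
    intro P ⟨hPn, hPr, _⟩ i j
    have h1 : P i j ≤ ∑ j', P i j' :=
      Finset.single_le_sum (fun j' _ => hPn i j') (Finset.mem_univ j)
    have h2 : p i ≤ ∑ i', p i' :=
      Finset.single_le_sum (fun i' _ => hp_nonneg i') (Finset.mem_univ i)
    rw [hPr i] at h1; rw [hp_sum] at h2; linarith
  -- entropy bounds
  have hhb : ∀ P, InTransportPolytope p q P → -K ≤ h P ∧ h P ≤ 0 := by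
    intro P hP
    constructor
    · have : -K = ∑ _i : Fin n, ∑ _j : Fin m, (-1 : ℝ) := by
        simp [hK]
      rw [this]
      exact Finset.sum_le_sum fun i _ => Finset.sum_le_sum fun j _ =>
        (mul_log_bounds (hP.1 i j) (hle1 P hP i j)).1
    · exact Finset.sum_nonpos fun i _ => Finset.sum_nonpos fun j _ =>
        (mul_log_bounds (hP.1 i j) (hle1 P hP i j)).2
  -- cost bound
  have hfb : ∀ P, InTransportPolytope p q P → -B ≤ f P := by
    intro P hP
    have : -B = ∑ i, ∑ j, -|C i j| := by simp [hB]
    rw [this]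
    refine Finset.sum_le_sum fun i _ => Finset.sum_le_sum fun j _ => ?_
    have h0 := hP.1 i j
    have h1 := hle1 P hP i j
    have := abs_le.mp (le_refl |C i j|)
    nlinarith [neg_abs_le (C i j), le_abs_self (C i j)]
  -- nonemptiness
  have hne : ∀ ε, (S ε).Nonempty := by
    intro ε
    refine ⟨_, fun i j => p i * q j, ⟨fun i j => mul_nonneg (hp_nonneg i) (hq_nonneg j),
      fun i => by rw [← Finset.mul_sum, hq_sum, mul_one],
      fun j => by rw [← Finset.sum_mul, hp_sum, one_mul]⟩, rfl⟩
  -- bddBelow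
  have hbdd : ∀ ε, 0 ≤ ε → BddBelow (S ε) := by
    intro ε hε
    refine ⟨-B - ε * K, fun v ⟨P, hP, hv⟩ => ?_⟩
    have := hfb P hP
    have h2 := (hhb P hP).1
    have : -(ε * K) ≤ ε * h P := by nlinarith
    rw [hv]; linarith [hfb P hP]
  -- key estimate
  have hkey : ∀ ε, 0 ≤ ε → |sInf (S ε) - sInf (S 0)| ≤ ε * K := by
    intro ε hε
    rw [abs_sub_le_iff]
    constructor
    · -- sInf (S ε) ≤ sInf (S 0) + ε * K
      have : sInf (S ε) - ε * K ≤ sInf (S 0) := by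
        refine le_csInf (hne 0) fun v ⟨P, hP, hv⟩ => ?_
        have h1 : f P + ε * h P ∈ S ε := ⟨P, hP, rfl⟩
        have h2 : sInf (S ε) ≤ f P + ε * h P := csInf_le (hbdd ε hε) h1
        have h3 : ε * h P ≤ 0 := mul_nonpos_of_nonneg_of_nonpos hε (hhb P hP).2
        have h4 : -(ε * K) ≤ ε * h P := by nlinarith [(hhb P hP).1]
        rw [hv]; simp only [zero_mul, add_zero]; linarith
      linarith
    · -- sInf (S 0) ≤ sInf (S ε) + ε * K
      have : sInf (S 0) - ε * K ≤ sInf (S ε) := by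
        refine le_csInf (hne ε) fun v ⟨P, hP, hv⟩ => ?_
        have h1 : f P + 0 * h P ∈ S 0 := ⟨P, hP, rfl⟩
        have h2 : sInf (S 0) ≤ f P := by
          have := csInf_le (hbdd 0 le_rfl) h1
          simpa using this
        have h4 : -(ε * K) ≤ ε * h P := by nlinarith [(hhb P hP).1]
        rw [hv]; linarith
      linarith
  -- conclude
  rw [Metric.tendsto_nhdsWithin_nhds]
  intro δ hδ
  refine ⟨δ / (K + 1), by positivity, fun ε hε hd => ?_⟩
  rw [Real.dist_eq] at hd ⊢
  have hε0 : 0 < ε := hε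
  have habs : |ε - 0| = ε := by rw [sub_zero, abs_of_pos hε0]
  rw [habs] at hd
  have := hkey ε hε0.le
  rw [hW ε, hW 0]
  calc |sInf (S ε) - sInf (S 0)| ≤ ε * K := this
    _ ≤ ε * (K + 1) := by nlinarith
    _ < δ / (K + 1) * (K + 1) := by
        apply mul_lt_mul_of_pos_right hd; linarith
    _ = δ := by field_simp
end

section
/- (Sinkhorn scaling) Let K ∈ ℝ^{n×m} be a matrix with strictly positive entries and let p ∈ ℝⁿ and q ∈ ℝᵐ be probability vectors with strictly positive entries (so Σ_i p_i = Σ_j q_j = 1). Then there exist vectors u ∈ ℝⁿ and v ∈ ℝᵐ with strictly positive entries such that the matrix P defined by P_{ij} = u_i K_{ij} v_j satisfies Σ_j P_{ij} = p_i for all i and Σ_i P_{ij} = q_j for all j, i.e. P ∈ Π(p,q). -/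
/-!
The scaling vectors come from a minimiser of the Sinkhorn objective
`f β = ∑ i, p i * log (∑ j, K i j * exp (β j)) - ∑ j, q j * β j`.
For `β` choose `u i = p i / ∑ j, K i j * exp (β j)` and `v = exp β`: the row sums of
`u i * K i j * v j` are then `p` for every `β`, and `∂ f / ∂ β j` is the `j`-th column sum
minus `q j`. Since `∑ p = ∑ q = 1`, `f` is invariant under adding a constant to `β`, and it
grows at least like `q j * (max β - β j)`, so it attains its minimum on a compact box;
there its gradient vanishes, which says that the column sums are `q`.
-/

open Finset

theorem exists_forall_le_of_forall_exists_mem_le {X α : Type*} [TopologicalSpace X]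
    [LinearOrder α] [TopologicalSpace α] [ClosedIicTopology α] {f : X → α} {s : Set X}
    (hs : IsCompact s) (hne : s.Nonempty) (hf : ContinuousOn f s)
    (h : ∀ x, ∃ y ∈ s, f y ≤ f x) : ∃ x, ∀ y, f x ≤ f y := by
  obtain ⟨x, -, hx⟩ := hs.exists_isMinOn hne hf
  refine ⟨x, fun y => ?_⟩
  obtain ⟨z, hzs, hz⟩ := h y
  exact (hx hzs).trans hz

namespace Sinkhorn

variable {ι κ : Type*} [Fintype κ] (K : Matrix ι κ ℝ) (p : ι → ℝ) (q : κ → ℝ)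

noncomputable def rowScaling (β : κ → ℝ) (i : ι) : ℝ :=
  p i / ∑ j, K i j * Real.exp (β j)

variable {K p q}

lemma sum_mul_exp_pos [Nonempty κ] (hK : ∀ i j, 0 < K i j) (β : κ → ℝ) (i : ι) :
    0 < ∑ j, K i j * Real.exp (β j) :=
  Finset.sum_pos (fun j _ => mul_pos (hK i j) (Real.exp_pos _)) univ_nonempty

lemma sum_rowScaling_mul_exp [Nonempty κ] (hK : ∀ i j, 0 < K i j) (β : κ → ℝ) (i : ι) :
    ∑ j, rowScaling K p β i * K i j * Real.exp (β j) = p i := by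
  simp_rw [mul_assoc, ← Finset.mul_sum]
  exact div_mul_cancel₀ _ (sum_mul_exp_pos hK β i).ne'

variable [Fintype ι] (K p q)

noncomputable def objective (β : κ → ℝ) : ℝ :=
  ∑ i, p i * Real.log (∑ j, K i j * Real.exp (β j)) - ∑ j, q j * β j

variable {K p q}

lemma continuous_objective [Nonempty κ] (hK : ∀ i j, 0 < K i j) :
    Continuous (objective K p q) := by
  refine .sub (continuous_finsetSum _ fun i _ => .mul continuous_const ?_) (by fun_prop)
  exact Continuous.log (by fun_prop) fun β => (sum_mul_exp_pos hK β i).ne'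

lemma objective_add_const [Nonempty κ] (hK : ∀ i j, 0 < K i j)
    (hp : ∑ i, p i = 1) (hq : ∑ j, q j = 1) (β : κ → ℝ) (c : ℝ) :
    objective K p q (fun j => β j + c) = objective K p q β := by
  have hlog : ∀ i, Real.log (∑ j, K i j * Real.exp (β j + c))
      = c + Real.log (∑ j, K i j * Real.exp (β j)) := by
    intro i
    simp_rw [Real.exp_add, ← mul_assoc, ← Finset.sum_mul]
    rw [Real.log_mul (sum_mul_exp_pos hK β i).ne' (Real.exp_pos c).ne', Real.log_exp, add_comm]
  simp only [objective, hlog, mul_add, Finset.sum_add_distrib, ← Finset.sum_mul, hp, hq]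
  ring

lemma le_objective (hK : ∀ i j, 0 < K i j) (hp_nonneg : ∀ i, 0 ≤ p i) (hp : ∑ i, p i = 1)
    (hq_nonneg : ∀ j, 0 ≤ q j) (hq : ∑ j, q j = 1) {c : ℝ}
    (hc : ∀ i j, c ≤ Real.log (K i j)) {β : κ → ℝ} {j₀ : κ} (hmax : ∀ j, β j ≤ β j₀)
    (j : κ) : c + q j * (β j₀ - β j) ≤ objective K p q β := by
  have hlog : ∀ i, c + β j₀ ≤ Real.log (∑ j, K i j * Real.exp (β j)) := by
    intro i
    calc c + β j₀ ≤ Real.log (K i j₀ * Real.exp (β j₀)) := by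
          rw [Real.log_mul (hK i j₀).ne' (Real.exp_pos _).ne', Real.log_exp]
          linarith [hc i j₀]
      _ ≤ Real.log (∑ j, K i j * Real.exp (β j)) :=
          Real.log_le_log (mul_pos (hK i j₀) (Real.exp_pos _)) <|
            Finset.single_le_sum (f := fun j => K i j * Real.exp (β j))
              (fun j _ => (mul_pos (hK i j) (Real.exp_pos _)).le) (mem_univ j₀)
  have hgap : q j * (β j₀ - β j) ≤ ∑ k, q k * (β j₀ - β k) :=
    Finset.single_le_sum (f := fun k => q k * (β j₀ - β k))
      (fun k _ => mul_nonneg (hq_nonneg k) (sub_nonneg.2 (hmax k))) (mem_univ j)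
  calc c + q j * (β j₀ - β j) ≤ ∑ i, p i * (c + β j₀) - ∑ k, q k * β k := by
        simp only [mul_sub, Finset.sum_sub_distrib, ← Finset.sum_mul, hq] at hgap
        rw [← Finset.sum_mul, hp]
        linarith
    _ ≤ objective K p q β :=
        sub_le_sub_right (Finset.sum_le_sum fun i _ =>
          mul_le_mul_of_nonneg_left (hlog i) (hp_nonneg i)) _

theorem exists_forall_objective_le [Nonempty κ] (hK : ∀ i j, 0 < K i j)
    (hp_nonneg : ∀ i, 0 ≤ p i) (hp : ∑ i, p i = 1) (hq_pos : ∀ j, 0 < q j)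
    (hq : ∑ j, q j = 1) : ∃ β, ∀ γ, objective K p q β ≤ objective K p q γ := by
  obtain ⟨c, hc⟩ := (Set.finite_range fun ij : ι × κ => Real.log (K ij.1 ij.2)).bddBelow
  have hle : ∀ {β : κ → ℝ} {j₀ : κ}, (∀ j, β j ≤ β j₀) →
      ∀ j, c + q j * (β j₀ - β j) ≤ objective K p q β :=
    le_objective hK hp_nonneg hp (fun j => (hq_pos j).le) hq fun i j => hc ⟨(i, j), rfl⟩
  set R := objective K p q 0 - c
  have hR : 0 ≤ R := by
    have := hle (β := 0) (j₀ := Classical.arbitrary κ) (fun _ => le_rfl) (Classical.arbitrary κ)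
    simp only [Pi.zero_apply, sub_self, mul_zero, add_zero] at this
    linarith
  -- Every `γ`, shifted so that its maximum is `0`, either lies in this box or is worse than `0`.
  let lo : κ → ℝ := fun j => -(R / q j)
  have h0 : (0 : κ → ℝ) ∈ Set.Icc lo 0 :=
    ⟨fun j => neg_nonpos.2 (div_nonneg hR (hq_pos j).le), le_rfl⟩
  refine exists_forall_le_of_forall_exists_mem_le isCompact_Icc ⟨0, h0⟩
    (continuous_objective hK).continuousOn fun γ => ?_
  obtain ⟨j₀, hj₀⟩ := Finite.exists_max γ
  set γ' : κ → ℝ := fun j => γ j + -γ j₀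
  have hγ' : objective K p q γ' = objective K p q γ := objective_add_const hK hp hq γ _
  by_cases hbox : lo ≤ γ'
  · exact ⟨γ', ⟨hbox, fun j => by simpa [γ'] using hj₀ j⟩, hγ'.le⟩
  · refine ⟨0, h0, ?_⟩
    obtain ⟨j, hj⟩ : ∃ j, γ' j < lo j := by simpa [Pi.le_def] using hbox
    have hgap : R < q j * (γ j₀ - γ j) := by
      have := (div_lt_iff₀' (hq_pos j)).1 (lt_neg.1 hj)
      simp only [γ'] at this
      linarith
    linarith [hle hj₀ j]

lemma hasDerivAt_objective_add_smul [Nonempty κ] (hK : ∀ i j, 0 < K i j) (β d : κ → ℝ) :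
    HasDerivAt (fun t : ℝ => objective K p q (β + t • d))
      (∑ i, p i * ((∑ j, K i j * Real.exp (β j) * d j) / ∑ j, K i j * Real.exp (β j))
        - ∑ j, q j * d j) 0 := by
  have hS : ∀ i, HasDerivAt (fun t : ℝ => ∑ j, K i j * Real.exp (β j + t * d j))
      (∑ j, K i j * Real.exp (β j) * d j) 0 := fun i => by
    simpa [mul_assoc] using HasDerivAt.fun_sum (u := univ) fun j _ =>
      ((hasDerivAt_mul_const (x := (0 : ℝ)) (d j)).const_add (β j)).exp.const_mul (K i j)
  have hlin : HasDerivAt (fun t : ℝ => ∑ j, q j * (β j + t * d j)) (∑ j, q j * d j) 0 := by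
    simpa using HasDerivAt.fun_sum (u := univ) fun j _ =>
      ((hasDerivAt_mul_const (x := (0 : ℝ)) (d j)).const_add (β j)).const_mul (q j)
  have := (HasDerivAt.fun_sum (u := univ) fun i _ =>
    ((hS i).log (by simpa using (sum_mul_exp_pos hK β i).ne')).const_mul (p i)).sub hlin
  simp only [zero_mul, add_zero] at this
  refine this.congr_of_eventuallyEq (.of_forall fun t => ?_)
  simp [objective]

lemma sum_rowScaling_mul_exp_of_forall_objective_le [Nonempty κ] [DecidableEq κ]
    (hK : ∀ i j, 0 < K i j) {β : κ → ℝ} (hβ : ∀ γ, objective K p q β ≤ objective K p q γ)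
    (j : κ) : ∑ i, rowScaling K p β i * K i j * Real.exp (β j) = q j := by
  have hmin : IsLocalMin (fun t : ℝ => objective K p q (β + t • Pi.single j 1)) 0 :=
    .of_forall fun t => by simpa using hβ _
  have hderiv := hmin.hasDerivAt_eq_zero (hasDerivAt_objective_add_smul hK β _)
  simp only [Pi.single_apply, mul_ite, mul_one, mul_zero, Finset.sum_ite_eq', mem_univ,
    if_true] at hderiv
  rw [← sub_eq_zero, ← hderiv]
  congr 1
  exact Finset.sum_congr rfl fun i _ => by rw [rowScaling]; ring

end Sinkhorn

open Sinkhorn in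
/-- **Sinkhorn scaling theorem.** For a strictly positive matrix `K` and strictly positive
probability vectors `p` and `q`, there exist strictly positive vectors `u` and `v` such that
the matrix `P_{ij} = u_i K_{ij} v_j` has row sums `p` and column sums `q`,
i.e. `P ∈ Π(p,q)`. -/
theorem sinkhorn_scaling {n m : ℕ}
    (K : Matrix (Fin n) (Fin m) ℝ) (hK : ∀ i j, 0 < K i j)
    (p : Fin n → ℝ) (q : Fin m → ℝ)
    (hp_pos : ∀ i, 0 < p i) (hq_pos : ∀ j, 0 < q j)
    (hp_sum : ∑ i, p i = 1) (hq_sum : ∑ j, q j = 1) :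
    ∃ (u : Fin n → ℝ) (v : Fin m → ℝ), (∀ i, 0 < u i) ∧ (∀ j, 0 < v j) ∧
      (∀ i, ∑ j, u i * K i j * v j = p i) ∧
      (∀ j, ∑ i, u i * K i j * v j = q j) := by
  have : Nonempty (Fin m) := univ_nonempty_iff.1 <| nonempty_of_sum_ne_zero (f := q) <| by
    rw [hq_sum]; exact one_ne_zero
  obtain ⟨β, hβ⟩ :=
    exists_forall_objective_le hK (fun i => (hp_pos i).le) hp_sum hq_pos hq_sum
  exact ⟨rowScaling K p β, fun j => Real.exp (β j),
    fun i => div_pos (hp_pos i) (sum_mul_exp_pos hK β i), fun j => Real.exp_pos _,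
    sum_rowScaling_mul_exp hK β, sum_rowScaling_mul_exp_of_forall_objective_le hK hβ⟩
end

section
/- Let λ ≠ 0 be real and let x, x', g ∈ ℝⁿ satisfy 1 − λ⟨x', g⟩ > 0 and 1 + λ⟨g, x − x'⟩ > 0. Define u' = g / (1 − λ⟨x', g⟩). Then 1 + λ⟨x, u'⟩ > 0, 1 + λ⟨x', u'⟩ > 0, and κ_λ(⟨g, x − x'⟩) = κ_λ(⟨x, u'⟩) − κ_λ(⟨x', u'⟩). Consequently, for a function ψ : Ω → ℝ differentiable at x' with gradient g = ∇ψ(x'), the λ-divergence D_{λ,ψ}(x,x') = ψ(x) − ψ(x') − κ_λ(⟨∇ψ(x'), x − x'⟩) also equals ψ(x) − ψ(x') − κ_λ(⟨x, u'⟩) + κ_λ(⟨x', u'⟩), where u' = ∇ψ(x')/(1 − λ⟨x', ∇ψ(x')⟩) is the λ-deformed gradient D^λψ(x'). -/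
open scoped RealInnerProductSpace

/-! Dividing `g` by `a = 1 - λ⟨x', g⟩` turns `1 + λ⟨x', ·⟩` into `a⁻¹` and `1 + λ⟨x, ·⟩` into
`(1 + λ⟨g, x - x'⟩) / a`, and `κ_λ` turns the quotient of these two positive numbers into the
difference of their `κ_λ`-values. -/

noncomputable def kappaFn (lam t : ℝ) : ℝ := (1 / lam) * Real.log (1 + lam * t)

section Real

variable {lam p q s t : ℝ}

theorem kappaFn_sub_kappaFn (hp : 0 < 1 + lam * p) (hq : 0 < 1 + lam * q) :
    kappaFn lam p - kappaFn lam q = 1 / lam * Real.log ((1 + lam * p) / (1 + lam * q)) := by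
  rw [kappaFn, kappaFn, Real.log_div hp.ne' hq.ne', mul_sub]

theorem one_add_mul_inv_mul (h : 1 - lam * s ≠ 0) :
    1 + lam * ((1 - lam * s)⁻¹ * t) = (1 + lam * (t - s)) / (1 - lam * s) := by
  field_simp
  ring

theorem one_add_mul_inv_mul_self (h : 1 - lam * s ≠ 0) :
    1 + lam * ((1 - lam * s)⁻¹ * s) = (1 - lam * s)⁻¹ := by
  rw [one_add_mul_inv_mul h, sub_self, mul_zero, add_zero, one_div]

theorem kappaFn_sub_eq_kappaFn_inv_mul_sub (hs : 0 < 1 - lam * s)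
    (hts : 0 < 1 + lam * (t - s)) :
    kappaFn lam (t - s) =
      kappaFn lam ((1 - lam * s)⁻¹ * t) - kappaFn lam ((1 - lam * s)⁻¹ * s) := by
  have ht : 0 < 1 + lam * ((1 - lam * s)⁻¹ * t) := by
    rw [one_add_mul_inv_mul hs.ne']
    exact div_pos hts hs
  have hs' : 0 < 1 + lam * ((1 - lam * s)⁻¹ * s) := by
    rw [one_add_mul_inv_mul_self hs.ne']
    exact inv_pos.mpr hs
  rw [kappaFn_sub_kappaFn ht hs', one_add_mul_inv_mul hs.ne', one_add_mul_inv_mul_self hs.ne',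
    div_inv_eq_mul, div_mul_cancel₀ _ hs.ne', kappaFn]

end Real

theorem lambda_divergence_two_expressions_general {n : ℕ} (lam : ℝ)
    (x x' g : EuclideanSpace ℝ (Fin n))
    (h1 : 0 < 1 - lam * ⟪x', g⟫)
    (h2 : 0 < 1 + lam * ⟪g, x - x'⟫)
    (u' : EuclideanSpace ℝ (Fin n))
    (hu' : u' = (1 - lam * ⟪x', g⟫)⁻¹ • g) :
    0 < 1 + lam * ⟪x, u'⟫ ∧
    0 < 1 + lam * ⟪x', u'⟫ ∧
    kappaFn lam ⟪g, x - x'⟫ = kappaFn lam ⟪x, u'⟫ - kappaFn lam ⟪x', u'⟫ ∧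
    (∀ ψ : EuclideanSpace ℝ (Fin n) → ℝ, DifferentiableAt ℝ ψ x' → gradient ψ x' = g →
      ψ x - ψ x' - kappaFn lam ⟪gradient ψ x', x - x'⟫
        = ψ x - ψ x' - kappaFn lam ⟪x, u'⟫ + kappaFn lam ⟪x', u'⟫) := by
  have hsub : ⟪g, x - x'⟫ = ⟪x, g⟫ - ⟪x', g⟫ := by
    rw [inner_sub_right, real_inner_comm g x, real_inner_comm g x']
  subst hu'
  simp only [real_inner_smul_right]
  rw [hsub] at h2
  have key := kappaFn_sub_eq_kappaFn_inv_mul_sub h1 h2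
  refine ⟨?_, ?_, hsub ▸ key, fun ψ _ hψ => by rw [hψ, hsub, key]; ring⟩
  · rw [one_add_mul_inv_mul h1.ne']
    exact div_pos h2 h1
  · rw [one_add_mul_inv_mul_self h1.ne']
    exact inv_pos.mpr h1

/-- **The two expressions for the λ-divergence agree.**
For `λ ≠ 0` and `x, x', g` with `1 − λ⟨x',g⟩ > 0` and `1 + λ⟨g, x−x'⟩ > 0`, setting
`u' = g / (1 − λ⟨x',g⟩)` (the λ-deformed gradient when `g = ∇ψ(x')`), one has
`1 + λ⟨x,u'⟩ > 0`, `1 + λ⟨x',u'⟩ > 0`, and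
`κ_λ(⟨g, x−x'⟩) = κ_λ(⟨x,u'⟩) − κ_λ(⟨x',u'⟩)`; consequently
`D_{λ,ψ}(x,x') = ψ(x) − ψ(x') − κ_λ(⟨x,u'⟩) + κ_λ(⟨x',u'⟩)` for any `ψ` differentiable
at `x'` with gradient `g`. -/
theorem lambda_divergence_two_expressions {n : ℕ} (lam : ℝ) (hlam : lam ≠ 0)
    (x x' g : EuclideanSpace ℝ (Fin n))
    (h1 : 0 < 1 - lam * ⟪x', g⟫)
    (h2 : 0 < 1 + lam * ⟪g, x - x'⟫)
    (u' : EuclideanSpace ℝ (Fin n))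
    (hu' : u' = (1 - lam * ⟪x', g⟫)⁻¹ • g) :
    0 < 1 + lam * ⟪x, u'⟫ ∧
    0 < 1 + lam * ⟪x', u'⟫ ∧
    kappaFn lam ⟪g, x - x'⟫ = kappaFn lam ⟪x, u'⟫ - kappaFn lam ⟪x', u'⟫ ∧
    (∀ ψ : EuclideanSpace ℝ (Fin n) → ℝ, DifferentiableAt ℝ ψ x' → gradient ψ x' = g →
      ψ x - ψ x' - kappaFn lam ⟪gradient ψ x', x - x'⟫
        = ψ x - ψ x' - kappaFn lam ⟪x, u'⟫ + kappaFn lam ⟪x', u'⟫) :=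
  lambda_divergence_two_expressions_general lam x x' g h1 h2 u' hu'
end
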